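/- Let m ≥ 3 with m ≡ 0 (mod 3), and let n ≥ 6 with n ≡ 4 (mod 6). Then γ_{r2}(C_m □ C_n) ≤ (m/3)·(n+2). -/

import Mathlib

open SimpleGraph Finset

/-- `f` is a `k`-rainbow dominating function of `G`: every vertex with empty label
sees all `k` colors in its open neighborhood. -/
def IsRainbowDominating {V : Type*} (G : SimpleGraph V) (k : ℕ)
    (f : V → Finset (Fin k)) : Prop :=
  ∀ v, f v = ∅ → ∀ c : Fin k, ∃ u, G.Adj v u ∧ c ∈ f u

/-- The `k`-rainbow domination number: the minimum weight of a `k`-rainbow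
dominating function. -/
noncomputable def rainbowDomNum {V : Type*} [Fintype V] (G : SimpleGraph V) (k : ℕ) : ℕ :=
  sInf {w | ∃ f : V → Finset (Fin k), IsRainbowDominating G k f ∧ w = ∑ v, (f v).card}

/-! Put the color `j mod 2` on the vertices `(i, j)` with `i ≡ j (mod 3)` and `j < n - 1`, and on
the whole last column `j = n - 1`; this costs `(n - 1) / 3 + 1` per row. An unlabeled `(i, j)` has
a vertical neighbour on the diagonal through its column, which carries `j mod 2`, and a horizontal
neighbour on a diagonal or on the last column, which carries the other color since `n` is even. -/

theorem rainbowDomNum_le {V : Type*} [Fintype V] {G : SimpleGraph V} {k : ℕ}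
    {f : V → Finset (Fin k)} (hf : IsRainbowDominating G k f) :
    rainbowDomNum G k ≤ ∑ v, (f v).card :=
  Nat.sInf_le ⟨f, hf, rfl⟩

namespace SimpleGraph

variable {n : ℕ}

theorem cycleGraph_adj_of_val_add_one_eq {u v : Fin n} (h : u.val + 1 = v.val) :
    (cycleGraph n).Adj u v :=
  pathGraph_le_cycleGraph (pathGraph_adj.2 (Or.inl h))

theorem cycleGraph_adj_of_val_eq_zero_of_val_eq_sub_one (hn : 2 ≤ n) {u v : Fin n}
    (hu : u.val = 0) (hv : v.val = n - 1) : (cycleGraph n).Adj u v := by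
  obtain ⟨n, rfl⟩ : ∃ k, n = k + 2 := ⟨n - 2, by omega⟩
  rw [cycleGraph_adj]
  left
  ext
  simp [Fin.sub_def, hu, hv]

theorem exists_cycleGraph_adj_val_mod_eq_succ {k : ℕ} (hk : k ∣ n) (hn : 2 ≤ n) (u : Fin n) :
    ∃ v, (cycleGraph n).Adj u v ∧ v.val % k = (u.val + 1) % k := by
  by_cases hu : u.val + 1 < n
  · exact ⟨⟨u.val + 1, hu⟩, cycleGraph_adj_of_val_add_one_eq rfl, rfl⟩
  · have hlast : u.val = n - 1 := by omega
    refine ⟨⟨0, by omega⟩,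
      (cycleGraph_adj_of_val_eq_zero_of_val_eq_sub_one hn rfl hlast).symm, ?_⟩
    rw [show u.val + 1 = n by omega, Nat.mod_eq_zero_of_dvd hk]; rfl

theorem exists_cycleGraph_adj_succ_val_mod_eq {k : ℕ} (hk : k ∣ n) (hn : 2 ≤ n) (u : Fin n) :
    ∃ v, (cycleGraph n).Adj u v ∧ (v.val + 1) % k = u.val % k := by
  by_cases hu : u.val = 0
  · refine ⟨⟨n - 1, by omega⟩,
      cycleGraph_adj_of_val_eq_zero_of_val_eq_sub_one hn hu rfl, ?_⟩
    rw [hu, show n - 1 + 1 = n by omega, Nat.mod_eq_zero_of_dvd hk]; rfl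
  · refine ⟨⟨u.val - 1, by omega⟩, (cycleGraph_adj_of_val_add_one_eq ?_).symm, ?_⟩
    · dsimp only; omega
    · congr 1; dsimp only; omega

end SimpleGraph

def diagonalLabeling (m n : ℕ) (v : Fin m × Fin n) : Finset (Fin 2) :=
  if v.1.val % 3 = v.2.val % 3 ∨ v.2.val = n - 1 then {Fin.ofNat 2 v.2.val} else ∅

theorem mem_diagonalLabeling {m n : ℕ} {i : Fin m} {j : Fin n} {c : Fin 2} :
    c ∈ diagonalLabeling m n (i, j) ↔
      (i.val % 3 = j.val % 3 ∨ j.val = n - 1) ∧ c = Fin.ofNat 2 j.val := by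
  unfold diagonalLabeling
  split_ifs with h <;> simp [h]

theorem exists_adj_labeled_column {n : ℕ} (hn : n % 2 = 0) {j : Fin n} (hj : j.val ≠ n - 1)
    {r : ℕ} (hr : r % 3 ≠ j.val % 3) :
    ∃ j', (cycleGraph n).Adj j j' ∧ (r % 3 = j'.val % 3 ∨ j'.val = n - 1) ∧
      j'.val % 2 ≠ j.val % 2 := by
  by_cases hsucc : r % 3 = (j.val + 1) % 3
  · refine ⟨⟨j.val + 1, by omega⟩, cycleGraph_adj_of_val_add_one_eq rfl, ?_⟩
    dsimp only; omega
  by_cases hj0 : j.val = 0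
  · refine ⟨⟨n - 1, by omega⟩,
      cycleGraph_adj_of_val_eq_zero_of_val_eq_sub_one (by omega) hj0 rfl, ?_⟩
    dsimp only; omega
  · refine ⟨⟨j.val - 1, by omega⟩, (cycleGraph_adj_of_val_add_one_eq ?_).symm, ?_⟩ <;>
      dsimp only <;> omega

theorem diagonalLabeling_isRainbowDominating {m n : ℕ} (hm : 0 < m) (hm3 : m % 3 = 0)
    (hn : n % 2 = 0) :
    IsRainbowDominating (cycleGraph m □ cycleGraph n) 2 (diagonalLabeling m n) := by
  rintro ⟨i, j⟩ hij c
  have hunlabeled : i.val % 3 ≠ j.val % 3 ∧ j.val ≠ n - 1 := by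
    simpa [diagonalLabeling] using hij
  have h3m : 3 ∣ m := Nat.dvd_of_mod_eq_zero hm3
  obtain ⟨i', hii', hi'⟩ : ∃ i', (cycleGraph m).Adj i i' ∧ i'.val % 3 = j.val % 3 := by
    obtain ⟨i₁, h₁, hi₁⟩ := exists_cycleGraph_adj_val_mod_eq_succ h3m (by omega) i
    obtain ⟨i₂, h₂, hi₂⟩ := exists_cycleGraph_adj_succ_val_mod_eq h3m (by omega) i
    by_cases h : (i.val + 1) % 3 = j.val % 3
    · exact ⟨i₁, h₁, by omega⟩
    · exact ⟨i₂, h₂, by omega⟩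
  obtain ⟨j', hjj', hj'⟩ := exists_adj_labeled_column hn hunlabeled.2 hunlabeled.1
  obtain rfl | rfl : c = Fin.ofNat 2 j.val ∨ c = Fin.ofNat 2 j'.val := by
    simp only [Fin.ext_iff, Fin.val_ofNat]
    omega
  · exact ⟨(i', j), boxProd_adj.2 (Or.inl ⟨hii', rfl⟩),
      mem_diagonalLabeling.2 ⟨Or.inl hi', rfl⟩⟩
  · exact ⟨(i, j'), boxProd_adj.2 (Or.inr ⟨hjj', rfl⟩),
      mem_diagonalLabeling.2 ⟨hj'.1, rfl⟩⟩

theorem card_filter_range_mod_eq_of_dvd {k N : ℕ} (hk : 0 < k) (hN : k ∣ N) (r : ℕ) :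
    #{x ∈ range N | x % k = r % k} = N / k := by
  rw [← Nat.count_eq_card_filter_range]
  exact (Nat.count_modEq_card N hk r).trans (by simp [Nat.mod_eq_zero_of_dvd hN])

theorem sum_card_diagonalLabeling {m n : ℕ} (hm3 : m % 3 = 0) (hn : n % 3 = 1) :
    ∑ v, (diagonalLabeling m n v).card = m / 3 * (n + 2) := by
  obtain ⟨a, rfl⟩ : ∃ a, m = 3 * a := ⟨m / 3, by omega⟩
  obtain ⟨b, rfl⟩ : ∃ b, n = 3 * b + 1 := ⟨n / 3, by omega⟩
  have hrow (i : Fin (3 * a)) :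
      ∑ j : Fin (3 * b + 1), (diagonalLabeling (3 * a) (3 * b + 1) (i, j)).card = b + 1 := by
    have hcard (j : ℕ) (hj : j < 3 * b) : (if i.val % 3 = j % 3 ∨ j = 3 * b then 1 else 0) =
        if j % 3 = i.val % 3 then (1 : ℕ) else 0 := by
      split_ifs <;> omega
    calc ∑ j : Fin (3 * b + 1), (diagonalLabeling (3 * a) (3 * b + 1) (i, j)).card
        = ∑ j ∈ range (3 * b + 1), if i.val % 3 = j % 3 ∨ j = 3 * b then 1 else 0 := by
          rw [← Fin.sum_univ_eq_sum_range]
          refine sum_congr rfl fun j _ => ?_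
          simp only [diagonalLabeling, Nat.add_sub_cancel]
          split_ifs <;> rfl
      _ = #{j ∈ range (3 * b) | j % 3 = i.val % 3} + 1 := by
          rw [sum_range_succ, if_pos (Or.inr rfl), card_filter]
          congr 1
          exact sum_congr rfl fun j hj => hcard j (mem_range.1 hj)
      _ = b + 1 := by
          rw [card_filter_range_mod_eq_of_dvd three_pos (dvd_mul_right 3 b)]
          omega
  rw [Fintype.sum_prod_type, sum_congr rfl fun i _ => hrow i, sum_const, card_univ,
    Fintype.card_fin, smul_eq_mul, Nat.mul_div_cancel_left _ three_pos]
  ring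

theorem two_rainbow_dom_cycles_upper_b4_general (m n : ℕ) (hm : 3 ≤ m) (hm3 : m % 3 = 0)
    (hb : n % 6 = 4) :
    rainbowDomNum (cycleGraph m □ cycleGraph n) 2 ≤ (m / 3) * (n + 2) :=
  calc rainbowDomNum (cycleGraph m □ cycleGraph n) 2
      ≤ ∑ v, (diagonalLabeling m n v).card :=
        rainbowDomNum_le (diagonalLabeling_isRainbowDominating (by omega) hm3 (by omega))
    _ = m / 3 * (n + 2) := sum_card_diagonalLabeling hm3 (by omega)

theorem two_rainbow_dom_cycles_upper_b4 (m n : ℕ) (hm : 3 ≤ m) (hm3 : m % 3 = 0)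
    (hn : 6 ≤ n) (hb : n % 6 = 4) :
    rainbowDomNum (cycleGraph m □ cycleGraph n) 2 ≤ (m / 3) * (n + 2) :=
  two_rainbow_dom_cycles_upper_b4_general m n hm hm3 hb
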